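/- Let (b_α)_{α ∈ N_0^M} be nonnegative reals indexed by multi-indices with b_0 ≤ c for some c ≥ 2, and suppose for all α with |α| ≥ 1 the recursion b_α ≤ (c/2) Σ_{β < α} C(α,β) |α−β|! μ^{α−β} b_β holds, where μ = (μ_k) is a nonnegative sequence. Then b_α ≤ |α|! μ^α c^{|α|+1} for all multi-indices α. -/
import Mathlib


open Finset Polynomial

lemma vand {M : ℕ} (α : Fin M → ℕ) (j : ℕ) :
    ∑ β ∈ (Finset.Iic α).filter (fun β => ∑ k, β k = j), ∏ k, (α k).choose (β k)
      = (∑ k, α k).choose j := by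
  have hIic : (Finset.Iic α) = Fintype.piFinset (fun k => Finset.Iic (α k)) := by
    ext β; simp [Fintype.mem_piFinset, Pi.le_def]
  have hfac : ∀ k : Fin M, (X + 1 : Polynomial ℕ) ^ α k
      = ∑ i ∈ Finset.Iic (α k), C ((α k).choose i) * X ^ i := by
    intro k
    ext m
    rw [coeff_X_add_one_pow, finset_sum_coeff]
    simp only [coeff_C_mul, coeff_X_pow, mul_ite, mul_one, mul_zero]
    rw [Finset.sum_ite_eq (Finset.Iic (α k)) m (fun i => (α k).choose i)]
    simp only [Finset.mem_Iic, Nat.cast_id]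
    by_cases h : m ≤ α k
    · simp [h]
    · simp [h, Nat.choose_eq_zero_of_lt (lt_of_not_ge h)]
  have key : ((X + 1 : Polynomial ℕ)) ^ (∑ k, α k)
      = ∑ β ∈ Fintype.piFinset (fun k => Finset.Iic (α k)),
          C (∏ k, (α k).choose (β k)) * X ^ (∑ k, β k) := by
    rw [← Finset.prod_pow_eq_pow_sum]
    calc ∏ k, (X + 1 : Polynomial ℕ) ^ α k
        = ∏ k, ∑ i ∈ Finset.Iic (α k), C ((α k).choose i) * X ^ i := by
          exact Finset.prod_congr rfl fun k _ => hfac k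
      _ = ∑ β ∈ Fintype.piFinset (fun k => Finset.Iic (α k)),
            ∏ k, C ((α k).choose (β k)) * X ^ (β k) := Finset.prod_univ_sum _ _
      _ = _ := by
          refine Finset.sum_congr rfl fun β _ => ?_
          rw [Finset.prod_mul_distrib, ← map_prod, Finset.prod_pow_eq_pow_sum]
  have := congrArg (fun p => Polynomial.coeff p j) key
  simp only [coeff_X_add_one_pow, Nat.cast_id, finset_sum_coeff, coeff_C_mul,
    coeff_X_pow] at this
  rw [Finset.sum_filter, hIic]
  rw [this]
  refine Finset.sum_congr rfl fun β _ => ?_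
  simp only [mul_ite, mul_one, mul_zero]
  congr 1
  simp [eq_comm]


/-- Let `(b_α)` be nonnegative reals indexed by multi-indices `α ∈ ℕ^M` with
`b_0 ≤ c` for some `c ≥ 2`, and suppose that for all `α` with `|α| ≥ 1` the
recursion `b_α ≤ (c/2) Σ_{β < α} C(α,β) |α−β|! μ^{α−β} b_β` holds, where `μ` is a
nonnegative sequence. Then `b_α ≤ |α|! μ^α c^{|α|+1}` for all multi-indices `α`. -/
theorem multiindex_recursion_bound {M : ℕ}
    (b : (Fin M → ℕ) → ℝ) (hb : ∀ α, 0 ≤ b α)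
    (c : ℝ) (hc : 2 ≤ c) (hb0 : b 0 ≤ c)
    (μ : Fin M → ℝ) (hμ : ∀ k, 0 ≤ μ k)
    (hrec : ∀ α : Fin M → ℕ, 1 ≤ ∑ k, α k →
      b α ≤ (c / 2) * ∑ β ∈ (Finset.Iic α).erase α,
        (∏ k, ((α k).choose (β k) : ℝ)) * ((∑ k, (α k - β k)).factorial : ℝ) *
          (∏ k, μ k ^ (α k - β k)) * b β) :
    ∀ α : Fin M → ℕ,
      b α ≤ ((∑ k, α k).factorial : ℝ) * (∏ k, μ k ^ α k) * c ^ ((∑ k, α k) + 1) := by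
  have hc0 : (0:ℝ) < c := by linarith
  suffices H : ∀ n : ℕ, ∀ α : Fin M → ℕ, ∑ k, α k = n →
      b α ≤ ((∑ k, α k).factorial : ℝ) * (∏ k, μ k ^ α k) * c ^ ((∑ k, α k) + 1) from
    fun α => H _ α rfl
  intro n
  induction n using Nat.strong_induction_on with
  | _ n IH =>
  intro α hα
  rcases Nat.eq_zero_or_pos n with h0 | h1
  · have hα0 : α = 0 := by
      subst h0
      funext k
      have := (Finset.sum_eq_zero_iff.mp hα) k (Finset.mem_univ k)
      simpa using this
    subst hα0
    simpa [hα] using hb0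
  · have hαn : 1 ≤ ∑ k, α k := hα ▸ h1
    set E := (Finset.Iic α).erase α with hE
    have hmem : ∀ β ∈ E, β ≤ α ∧ (∑ k, β k) < n := by
      intro β hβ
      rw [hE, Finset.mem_erase, Finset.mem_Iic] at hβ
      refine ⟨hβ.2, ?_⟩
      rw [← hα]
      refine Finset.sum_lt_sum (fun k _ => hβ.2 k) ?_
      by_contra hcon
      push_neg at hcon
      exact hβ.1 (funext fun k => le_antisymm (hβ.2 k) (hcon k (Finset.mem_univ k)))
    set P : ℝ := ∏ k, μ k ^ α k with hPdef
    have hP : (0:ℝ) ≤ P := Finset.prod_nonneg fun k _ => pow_nonneg (hμ k) _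
    set f : (Fin M → ℕ) → ℝ := fun β =>
      (∏ k, ((α k).choose (β k) : ℝ)) * ((n - ∑ k, β k).factorial : ℝ) *
        (((∑ k, β k).factorial : ℝ) * P * c ^ ((∑ k, β k) + 1)) with hfdef
    -- Step A : termwise bound
    have stepA : b α ≤ (c / 2) * ∑ β ∈ E, f β := by
      refine le_trans (hrec α hαn) ?_
      refine mul_le_mul_of_nonneg_left ?_ (by linarith)
      refine Finset.sum_le_sum fun β hβ => ?_
      obtain ⟨hβle, hβlt⟩ := hmem β hβ
      have hsub : (∑ k, (α k - β k)) = n - ∑ k, β k := by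
        rw [Finset.sum_tsub_distrib _ (fun k _ => hβle k), hα]
      have hChoose : (0:ℝ) ≤ ∏ k, ((α k).choose (β k) : ℝ) :=
        Finset.prod_nonneg fun k _ => by positivity
      have hMu : (0:ℝ) ≤ ∏ k, μ k ^ (α k - β k) :=
        Finset.prod_nonneg fun k _ => pow_nonneg (hμ k) _
      have hIH := IH _ hβlt β rfl
      have hmul : (∏ k, μ k ^ (α k - β k)) * ∏ k, μ k ^ (β k) = P := by
        rw [hPdef, ← Finset.prod_mul_distrib]
        refine Finset.prod_congr rfl fun k _ => ?_
        rw [← pow_add, Nat.sub_add_cancel (hβle k)]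
      calc (∏ k, ((α k).choose (β k) : ℝ)) * ((∑ k, (α k - β k)).factorial : ℝ) *
            (∏ k, μ k ^ (α k - β k)) * b β
          ≤ (∏ k, ((α k).choose (β k) : ℝ)) * ((∑ k, (α k - β k)).factorial : ℝ) *
            (∏ k, μ k ^ (α k - β k)) *
            (((∑ k, β k).factorial : ℝ) * (∏ k, μ k ^ β k) * c ^ ((∑ k, β k) + 1)) := by
            refine mul_le_mul_of_nonneg_left hIH ?_
            positivity
        _ = f β := by
            rw [hfdef, hsub]
            ring_nf
            rw [← hmul]
            ring
    -- Step B : fiberwise grouping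
    have stepB : ∑ β ∈ E, f β = ∑ j ∈ Finset.range n, ∑ β ∈ E with (∑ k, β k) = j, f β := by
      rw [Finset.sum_fiberwise_of_maps_to (fun β hβ => Finset.mem_range.mpr (hmem β hβ).2)]
    -- Step C : each fiber
    have stepC : ∀ j ∈ Finset.range n,
        (∑ β ∈ E with (∑ k, β k) = j, f β) = (n.factorial : ℝ) * P * c ^ (j + 1) := by
      intro j hj
      have hjn : j < n := Finset.mem_range.mp hj
      have hfib : (E.filter (fun β => (∑ k, β k) = j))
          = (Finset.Iic α).filter (fun β => (∑ k, β k) = j) := by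
        rw [hE]
        ext β
        simp only [Finset.mem_filter, Finset.mem_erase, Finset.mem_Iic]
        constructor
        · rintro ⟨⟨_, h2⟩, h3⟩; exact ⟨h2, h3⟩
        · rintro ⟨h2, h3⟩
          refine ⟨⟨?_, h2⟩, h3⟩
          rintro rfl
          omega
      have : (∑ β ∈ E with (∑ k, β k) = j, f β)
          = (∑ β ∈ E with (∑ k, β k) = j, (∏ k, ((α k).choose (β k) : ℝ)))
            * (((n - j).factorial : ℝ) * ((j.factorial : ℝ) * P * c ^ (j + 1))) := by
        rw [Finset.sum_mul]
        refine Finset.sum_congr rfl fun β hβ => ?_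
        have hβj : (∑ k, β k) = j := (Finset.mem_filter.mp hβ).2
        rw [hfdef]
        simp only [hβj]
        ring
      rw [this, hfib]
      have hv : (∑ β ∈ (Finset.Iic α).filter (fun β => (∑ k, β k) = j),
          (∏ k, ((α k).choose (β k) : ℝ))) = ((n.choose j : ℕ) : ℝ) := by
        rw [← hα, ← vand α j]
        push_cast
        rfl
      rw [hv]
      have hnj : n.choose j * (n - j).factorial * j.factorial = n.factorial := by
        rw [mul_right_comm]
        exact Nat.choose_mul_factorial_mul_factorial hjn.le
      have : ((n.choose j : ℕ) : ℝ) * ((n - j).factorial : ℝ) * (j.factorial : ℝ)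
          = (n.factorial : ℝ) := by
        push_cast [← hnj]
        ring
      calc ((n.choose j : ℕ) : ℝ) * (((n - j).factorial : ℝ) * ((j.factorial : ℝ) * P * c ^ (j + 1)))
          = (((n.choose j : ℕ) : ℝ) * ((n - j).factorial : ℝ) * (j.factorial : ℝ)) * (P * c ^ (j + 1)) := by ring
        _ = (n.factorial : ℝ) * P * c ^ (j + 1) := by rw [this]; ring
    -- Step D : geometric sum
    have hc1 : (0:ℝ) < c - 1 := by linarith
    have hcn : (1:ℝ) ≤ c ^ n := one_le_pow₀ (by linarith)
    have hgeom : ∑ j ∈ Finset.range n, c ^ j = (c ^ n - 1) / (c - 1) :=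
      geom_sum_eq (by linarith) n
    have stepD : ∑ j ∈ Finset.range n, (n.factorial : ℝ) * P * c ^ (j + 1)
        = (n.factorial : ℝ) * P * c * ((c ^ n - 1) / (c - 1)) := by
      rw [← hgeom, Finset.mul_sum]
      refine Finset.sum_congr rfl fun j _ => ?_
      rw [pow_succ]
      ring
    have hkey : (c / 2) * ((n.factorial : ℝ) * P * c * ((c ^ n - 1) / (c - 1)))
        ≤ (n.factorial : ℝ) * P * c ^ (n + 1) := by
      have hfacP : (0:ℝ) ≤ (n.factorial : ℝ) * P := by positivity
      have hineq : (c / 2) * (c * ((c ^ n - 1) / (c - 1))) ≤ c ^ (n + 1) := by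
        have h2c : (0:ℝ) < 2 * (c - 1) := by linarith
        have heq : (c / 2) * (c * ((c ^ n - 1) / (c - 1)))
            = (c * (c * (c ^ n - 1))) / (2 * (c - 1)) := by
          field_simp
        rw [heq, div_le_iff₀ h2c, pow_succ]
        nlinarith [mul_nonneg (mul_nonneg (by linarith : (0:ℝ) ≤ c - 2) hc0.le)
          (by linarith : (0:ℝ) ≤ c ^ n)]
      calc (c / 2) * ((n.factorial : ℝ) * P * c * ((c ^ n - 1) / (c - 1)))
          = ((n.factorial : ℝ) * P) * ((c / 2) * (c * ((c ^ n - 1) / (c - 1)))) := by ring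
        _ ≤ ((n.factorial : ℝ) * P) * c ^ (n + 1) :=
            mul_le_mul_of_nonneg_left hineq hfacP
        _ = (n.factorial : ℝ) * P * c ^ (n + 1) := by ring
    rw [hα]
    calc b α ≤ (c / 2) * ∑ β ∈ E, f β := stepA
      _ = (c / 2) * ∑ j ∈ Finset.range n, (n.factorial : ℝ) * P * c ^ (j + 1) := by
          rw [stepB, Finset.sum_congr rfl stepC]
      _ = (c / 2) * ((n.factorial : ℝ) * P * c * ((c ^ n - 1) / (c - 1))) := by rw [stepD]
      _ ≤ (n.factorial : ℝ) * P * c ^ (n + 1) := hkey
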